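/- For 0 < ε ≤ 1 let v_ε be the continuous 2π-periodic function equal to ε^{-2} max(ε − |x|, 0) for |x| ≤ 4 (extended periodically) and set u_ε = v_ε − (2π)^{-1}. Then, up to positive constants independent of ε: ∫ u_ε³ dx ≍ ε^{-2}, ∫ u_ε² dx ≍ ε^{-1}, and ∫ (∂_x u_ε)² dx ≍ ε^{-3}. Consequently, the inequality |∫ u³ dx| ≤ C ‖u‖_{H_0^1}^{2−κ} |u|_{L²}^{1+κ} for all u ∈ H_0^1 forces κ ≤ 3/2. -/

import Mathlib

/-!
On one period, `u_ε` is an affine function of the tent `max (ε - |x|) 0`, so every integral in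
question can be computed exactly: `∫ u_ε = 0`, `∫ u_ε² = 2/(3ε) - 1/(2π)`,
`∫ u_ε³ = 1/(2ε²) - 1/(πε) + 1/(2π²)` and `∫ (∂ₓu_ε)² = 2/ε³`. Testing the interpolation
inequality on `u_ε` therefore gives `ε⁻² ≲ ε^(-(3(2 - κ) + (1 + κ))/2)` as `ε → 0`, which is
only possible if `2 ≤ (7 - 2κ)/2`, i.e. `κ ≤ 3/2`.
-/

open scoped Real
open intervalIntegral

noncomputable section

/-- Reduction of `x` modulo `2π` to the fundamental interval around `0`. -/
def per (x : ℝ) : ℝ := x - 2 * π * round (x / (2 * π))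

/-- The continuous `2π`-periodic spike function `v_ε`, equal to `ε⁻² max(ε − |x|, 0)` near
`x = 0`, shifted by its mean value: `u_ε = v_ε − (2π)⁻¹`. -/
def uSpike (ε : ℝ) (x : ℝ) : ℝ := (ε ^ 2)⁻¹ * max (ε - |per x|) 0 - (2 * π)⁻¹

open MeasureTheory Set Filter Topology

lemma per_eq_self {x : ℝ} (h₁ : -π ≤ x) (h₂ : x < π) : per x = x := by
  have : round (x / (2 * π)) = 0 := by
    rw [round_eq_zero_iff, mem_Ico, le_div_iff₀ (by positivity), div_lt_iff₀ (by positivity)]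
    constructor <;> linarith
  simp [per, this]

lemma abs_per_eq_abs {x : ℝ} (hx : x ∈ Icc (-π) π) : |per x| = |x| := by
  rcases hx.2.lt_or_eq with hlt | rfl
  · rw [per_eq_self hx.1 hlt]
  · have : π / (2 * π) = 2⁻¹ := by field_simp
    simp only [per, this, round_two_inv, Int.cast_one]
    rw [show π - 2 * π * 1 = -π by ring, abs_neg]

lemma per_add_two_pi (x : ℝ) : per (x + 2 * π) = per x := by
  have : (x + 2 * π) / (2 * π) = x / (2 * π) + 1 := by field_simp
  simp only [per, this, round_add_one, Int.cast_add, Int.cast_one]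
  ring

lemma abs_per_le (x : ℝ) (k : ℤ) : |per x| ≤ |x - 2 * π * k| := by
  have hπ : (0 : ℝ) < 2 * π := by positivity
  have hscale : ∀ m : ℝ, |x - 2 * π * m| = |x / (2 * π) - m| * (2 * π) := fun m => by
    rw [← abs_of_pos hπ, ← abs_mul, abs_of_pos hπ]
    congr 1
    field_simp
  rw [per, hscale, hscale]
  exact mul_le_mul_of_nonneg_right (round_le _ k) hπ.le

lemma lipschitzWith_abs_per : LipschitzWith 1 fun x => |per x| := by
  refine LipschitzWith.of_le_add fun x y => ?_
  calc |per x| ≤ |(x - y) + per y| := by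
        rw [show (x - y) + per y = x - 2 * π * round (y / (2 * π)) by rw [per]; ring]
        exact abs_per_le x _
    _ ≤ |per y| + dist x y := by rw [Real.dist_eq, add_comm |per y|]; exact abs_add_le _ _

lemma uSpike_periodic (ε : ℝ) : Function.Periodic (uSpike ε) (2 * π) := fun x => by
  simp only [uSpike, per_add_two_pi]

lemma lipschitzWith_uSpike (ε : ℝ) : LipschitzWith ‖(ε ^ 2)⁻¹‖₊ (uSpike ε) := by
  refine LipschitzWith.of_dist_le_mul fun x y => ?_
  have hmax : |max (ε - |per x|) 0 - max (ε - |per y|) 0| ≤ |x - y| := by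
    refine (abs_max_sub_max_le_abs _ _ _).trans ?_
    have := lipschitzWith_abs_per.dist_le_mul x y
    simp only [Real.dist_eq, NNReal.coe_one, one_mul] at this
    rwa [show ε - |per x| - (ε - |per y|) = -(|per x| - |per y|) by ring, abs_neg]
  rw [Real.dist_eq, Real.dist_eq, coe_nnnorm, Real.norm_eq_abs, uSpike, uSpike,
    show ∀ a b c : ℝ, a * b - c - (a * max (ε - |per y|) 0 - c) = a * (b - max (ε - |per y|) 0)
      from fun _ _ _ => by ring, abs_mul]
  gcongr

lemma integral_comp_abs_symmetric {f : ℝ → ℝ} (hf : Continuous f) {a : ℝ} (ha : 0 ≤ a) :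
    ∫ x in (-a)..a, f |x| = 2 * ∫ x in (0 : ℝ)..a, f x := by
  have hfa : Continuous fun x => f |x| := by fun_prop
  have hneg : ∫ x in (-a)..0, f |x| = ∫ x in (0 : ℝ)..a, f |x| := by
    simpa using (integral_comp_neg (a := 0) (b := a) fun x => f |x|).symm
  have hpos : ∫ x in (0 : ℝ)..a, f |x| = ∫ x in (0 : ℝ)..a, f x :=
    integral_congr fun x hx => by rw [abs_of_nonneg (uIcc_of_le ha ▸ hx).1]
  rw [← integral_add_adjacent_intervals (hfa.intervalIntegrable _ 0) (hfa.intervalIntegrable 0 _),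
    hneg, hpos, two_mul]

def tent (ε x : ℝ) : ℝ := max (ε - |x|) 0

lemma integral_affine_tent_pow {ε a c d : ℝ} (hε : 0 ≤ ε) (hεa : ε ≤ a) (hc : c ≠ 0) (n : ℕ) :
    ∫ x in (-a)..a, (c * tent ε x + d) ^ n =
      2 * ((c * ε + d) ^ (n + 1) - d ^ (n + 1)) / (c * (n + 1)) + 2 * (a - ε) * d ^ n := by
  have hcont : Continuous fun t : ℝ => (c * max (ε - t) 0 + d) ^ n := by fun_prop
  have hint := fun u v : ℝ => hcont.intervalIntegrable (μ := volume) u v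
  have hslope : ∫ t in (0 : ℝ)..ε, (c * max (ε - t) 0 + d) ^ n =
      ((c * ε + d) ^ (n + 1) - d ^ (n + 1)) / (c * (n + 1)) := by
    have hderiv : ∀ t, HasDerivAt (fun t => (c * (ε - t) + d) ^ (n + 1) / -(c * (n + 1)))
        ((c * (ε - t) + d) ^ n) t := fun t => by
      refine (((((hasDerivAt_id' t).const_sub ε).const_mul c).add_const d).fun_pow (n + 1)
        |>.div_const _).congr_deriv ?_
      field_simp
      push_cast
      ring
    rw [integral_congr (g := fun t => (c * (ε - t) + d) ^ n) fun t ht => by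
        rw [max_eq_left (by linarith [(uIcc_of_le hε ▸ ht).2])],
      integral_eq_sub_of_hasDerivAt (fun t _ => hderiv t)
        ((by fun_prop : Continuous _).intervalIntegrable _ _)]
    simp only [sub_self, mul_zero, zero_add, sub_zero, div_neg]
    ring
  have hflat : ∫ t in ε..a, (c * max (ε - t) 0 + d) ^ n = (a - ε) * d ^ n := by
    rw [integral_congr (g := fun _ => d ^ n) fun t ht => by
        rw [max_eq_right (by linarith [(uIcc_of_le hεa ▸ ht).1]), mul_zero, zero_add],
      intervalIntegral.integral_const, smul_eq_mul]
  refine (integral_comp_abs_symmetric hcont (hε.trans hεa)).trans ?_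
  rw [← integral_add_adjacent_intervals (hint 0 ε) (hint ε a), hslope, hflat]
  ring

lemma integral_uSpike_pow {ε : ℝ} (hε : 0 < ε) (hεπ : ε ≤ π) (n : ℕ) :
    ∫ x in (-π)..π, uSpike ε x ^ n =
      2 * (((ε ^ 2)⁻¹ * ε + -(2 * π)⁻¹) ^ (n + 1) - (-(2 * π)⁻¹) ^ (n + 1)) /
          ((ε ^ 2)⁻¹ * (n + 1)) + 2 * (π - ε) * (-(2 * π)⁻¹) ^ n := by
  refine (integral_congr fun x hx => ?_).trans
    (integral_affine_tent_pow hε.le hεπ (inv_ne_zero (pow_ne_zero 2 hε.ne')) n)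
  rw [uIcc_of_le (by linarith [Real.pi_pos])] at hx
  simp only [uSpike, tent, abs_per_eq_abs hx, sub_eq_add_neg]

lemma integral_uSpike {ε : ℝ} (hε : 0 < ε) (hεπ : ε ≤ π) :
    ∫ x in (-π)..π, uSpike ε x = 0 := by
  have := hε.ne'
  have := Real.pi_pos.ne'
  simpa using (integral_uSpike_pow hε hεπ 1).trans (by push_cast; field_simp; ring)

lemma integral_uSpike_sq {ε : ℝ} (hε : 0 < ε) (hεπ : ε ≤ π) :
    ∫ x in (-π)..π, uSpike ε x ^ 2 = 2 / 3 * ε⁻¹ - (2 * π)⁻¹ := by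
  rw [integral_uSpike_pow hε hεπ]
  have := hε.ne'
  have := Real.pi_pos.ne'
  push_cast
  field_simp
  ring

lemma integral_uSpike_cube {ε : ℝ} (hε : 0 < ε) (hεπ : ε ≤ π) :
    ∫ x in (-π)..π, uSpike ε x ^ 3 = 1 / 2 * ε⁻¹ ^ 2 - ε⁻¹ / π + 1 / (2 * π ^ 2) := by
  rw [integral_uSpike_pow hε hεπ]
  have := hε.ne'
  have := Real.pi_pos.ne'
  push_cast
  field_simp
  ring

lemma deriv_tent_sq {ε x : ℝ} (hx₀ : x ≠ 0) (hxε : |x| ≠ ε) :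
    deriv (tent ε) x ^ 2 = (Ioo (-ε) ε).indicator 1 x := by
  rcases hxε.lt_or_gt with hin | hout
  · have hev : tent ε =ᶠ[𝓝 x] fun y => ε - |y| := by
      filter_upwards [(isOpen_lt continuous_abs continuous_const).mem_nhds hin] with y hy
      exact max_eq_left (sub_nonneg.mpr hy.le)
    have habs : deriv (|·|) x ^ 2 = 1 := by
      rcases hx₀.lt_or_gt with hneg | hpos
      · simp [(hasDerivAt_abs_neg hneg).deriv]
      · simp [(hasDerivAt_abs_pos hpos).deriv]
    rw [hev.deriv_eq, deriv_const_sub, neg_sq, habs,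
      indicator_of_mem (show x ∈ Ioo (-ε) ε from abs_lt.mp hin), Pi.one_apply]
  · have hev : tent ε =ᶠ[𝓝 x] fun _ => 0 := by
      filter_upwards [(isOpen_lt continuous_const continuous_abs).mem_nhds hout] with y hy
      exact max_eq_right (sub_nonpos.mpr hy.le)
    rw [hev.deriv_eq, deriv_const,
      indicator_of_notMem (show x ∉ Ioo (-ε) ε from fun h => hout.not_gt (abs_lt.mpr h))]
    simp

lemma deriv_uSpike {ε x : ℝ} (hx : |x| < π) :
    deriv (uSpike ε) x = (ε ^ 2)⁻¹ * deriv (tent ε) x := by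
  have hev : uSpike ε =ᶠ[𝓝 x] fun y => (ε ^ 2)⁻¹ * tent ε y - (2 * π)⁻¹ := by
    filter_upwards [(isOpen_lt continuous_abs continuous_const).mem_nhds hx] with y hy
    rw [uSpike, per_eq_self (abs_lt.mp hy).1.le (abs_lt.mp hy).2, tent]
  rw [hev.deriv_eq, deriv_sub_const, deriv_const_mul_field]

lemma integral_deriv_uSpike_sq {ε : ℝ} (hε : 0 < ε) (hεπ : ε ≤ π) :
    ∫ x in (-π)..π, deriv (uSpike ε) x ^ 2 = 2 * ε⁻¹ ^ 3 := by
  have hae : ∀ᵐ x, x ∈ uIoc (-π) π →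
      deriv (uSpike ε) x ^ 2 = (Ioo (-ε) ε).indicator (fun _ => ((ε ^ 2)⁻¹) ^ 2) x := by
    filter_upwards [measure_eq_zero_iff_ae_notMem.mp ((toFinite {0, ε, -ε, π}).measure_zero volume)]
      with x hx hxI
    simp only [mem_insert_iff, mem_singleton_iff, not_or] at hx
    obtain ⟨hx₀, hxε, hxε', hxπ⟩ := hx
    rw [uIoc_of_le (by linarith [Real.pi_pos])] at hxI
    have hxπ' : |x| < π := abs_lt.mpr ⟨hxI.1, hxI.2.lt_of_ne hxπ⟩
    have hxε'' : |x| ≠ ε := fun h => (abs_eq hε.le).mp h |>.elim hxε hxε'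
    rw [deriv_uSpike hxπ', mul_pow, deriv_tent_sq hx₀ hxε'']
    simp [indicator_apply]
  rw [integral_congr_ae hae, integral_of_le (by linarith [Real.pi_pos]),
    setIntegral_indicator measurableSet_Ioo,
    inter_eq_right.mpr (Ioo_subset_Ioc_self.trans (Ioc_subset_Ioc (by linarith) hεπ)),
    setIntegral_const, Real.volume_real_Ioo_of_le (by linarith), smul_eq_mul]
  field_simp
  ring

lemma half_sub_one_div_pi_pos : 0 < 1 / 2 - 1 / π := by
  rw [sub_pos, div_lt_div_iff₀ Real.pi_pos two_pos]
  linarith [Real.pi_gt_three]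

lemma integral_uSpike_cube_ge {ε : ℝ} (hε : 0 < ε) (hε₁ : ε ≤ 1) :
    (1 / 2 - 1 / π) * ε⁻¹ ^ 2 ≤ ∫ x in (-π)..π, uSpike ε x ^ 3 := by
  have hs : 1 ≤ ε⁻¹ := one_le_inv₀ hε |>.mpr hε₁
  rw [integral_uSpike_cube hε (hε₁.trans (by linarith [Real.pi_gt_three]))]
  have : ε⁻¹ / π ≤ ε⁻¹ ^ 2 / π := by gcongr; nlinarith
  have : 0 < 1 / (2 * π ^ 2) := by positivity
  linarith [div_eq_mul_one_div (ε⁻¹ ^ 2) π]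

lemma integral_uSpike_cube_le {ε : ℝ} (hε : 0 < ε) (hε₁ : ε ≤ 1) :
    ∫ x in (-π)..π, uSpike ε x ^ 3 ≤ ε⁻¹ ^ 2 := by
  have hs : 1 ≤ ε⁻¹ := one_le_inv₀ hε |>.mpr hε₁
  have hπ := Real.pi_gt_three
  rw [integral_uSpike_cube hε (hε₁.trans (by linarith))]
  have : 1 / (2 * π ^ 2) ≤ ε⁻¹ / π := by
    rw [div_le_div_iff₀ (by positivity) (by positivity)]
    nlinarith
  nlinarith

lemma integral_uSpike_sq_ge {ε : ℝ} (hε : 0 < ε) (hε₁ : ε ≤ 1) :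
    1 / 2 * ε⁻¹ ≤ ∫ x in (-π)..π, uSpike ε x ^ 2 := by
  have hs : 1 ≤ ε⁻¹ := one_le_inv₀ hε |>.mpr hε₁
  have hπ := Real.pi_gt_three
  rw [integral_uSpike_sq hε (hε₁.trans (by linarith))]
  have : (2 * π)⁻¹ ≤ 1 / 6 := by rw [inv_le_comm₀ (by positivity) (by norm_num)]; linarith
  linarith

lemma integral_uSpike_sq_le {ε : ℝ} (hε : 0 < ε) (hε₁ : ε ≤ 1) :
    ∫ x in (-π)..π, uSpike ε x ^ 2 ≤ 2 / 3 * ε⁻¹ := by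
  rw [integral_uSpike_sq hε (hε₁.trans (by linarith [Real.pi_gt_three]))]
  linarith [inv_pos.mpr (mul_pos two_pos Real.pi_pos)]

lemma le_of_forall_one_le_mul_rpow_le {c K p q : ℝ} (hc : 0 < c)
    (h : ∀ s : ℝ, 1 ≤ s → c * s ^ p ≤ K * s ^ q) : p ≤ q := by
  by_contra! hqp
  obtain ⟨s, hsK, hs₁⟩ := ((tendsto_rpow_atTop (sub_pos.mpr hqp)).eventually_gt_atTop (K / c)
    |>.and (eventually_ge_atTop 1)).exists
  have hs₀ : 0 < s := by linarith
  have hle := h s hs₁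
  rw [← sub_add_cancel p q, Real.rpow_add hs₀, ← mul_assoc] at hle
  have := le_of_mul_le_mul_right hle (Real.rpow_pos_of_pos hs₀ q)
  rw [div_lt_iff₀ hc] at hsK
  linarith

def CubicInterpolationBound (κ C : ℝ) : Prop :=
  ∀ u : ℝ → ℝ, Function.Periodic u (2 * π) → (∃ L, LipschitzWith L u) →
    (∫ x in (-π)..π, u x) = 0 →
    |∫ x in (-π)..π, u x ^ 3| ≤
      C * (∫ x in (-π)..π, deriv u x ^ 2) ^ ((2 - κ) / 2) *
        (∫ x in (-π)..π, u x ^ 2) ^ ((1 + κ) / 2)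

lemma CubicInterpolationBound.le_three_halves {κ C : ℝ} (hC : 0 ≤ C)
    (h : CubicInterpolationBound κ C) : κ ≤ 3 / 2 := by
  by_contra! hκ
  suffices 2 ≤ 3 * ((2 - κ) / 2) + (1 + κ) / 2 by linarith
  refine le_of_forall_one_le_mul_rpow_le (c := 1 / 2 - 1 / π)
    (K := C * 2 ^ ((2 - κ) / 2) * (2 / 3) ^ ((1 + κ) / 2))
    half_sub_one_div_pi_pos fun s hs => ?_
  have hs₀ : 0 < s := by linarith
  have hε : 0 < s⁻¹ := inv_pos.mpr hs₀
  have hε₁ : s⁻¹ ≤ 1 := inv_le_one_of_one_le₀ hs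
  have hεπ : s⁻¹ ≤ π := hε₁.trans (by linarith [Real.pi_gt_three])
  have hineq := h (uSpike s⁻¹) (uSpike_periodic _) ⟨_, lipschitzWith_uSpike _⟩
    (integral_uSpike hε hεπ)
  rw [integral_deriv_uSpike_sq hε hεπ, inv_inv] at hineq
  calc (1 / 2 - 1 / π) * s ^ (2 : ℝ) = (1 / 2 - 1 / π) * s⁻¹⁻¹ ^ 2 := by
        rw [inv_inv, Real.rpow_two]
    _ ≤ ∫ x in (-π)..π, uSpike s⁻¹ x ^ 3 := integral_uSpike_cube_ge hε hε₁
    _ ≤ C * (2 * s ^ 3) ^ ((2 - κ) / 2) * (∫ x in (-π)..π, uSpike s⁻¹ x ^ 2) ^ ((1 + κ) / 2) :=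
        (le_abs_self _).trans hineq
    _ ≤ C * (2 * s ^ 3) ^ ((2 - κ) / 2) * (2 / 3 * s) ^ ((1 + κ) / 2) := by
        gcongr
        · exact integral_nonneg (by linarith [Real.pi_pos]) fun x _ => sq_nonneg _
        · simpa using integral_uSpike_sq_le hε hε₁
    _ = C * 2 ^ ((2 - κ) / 2) * (2 / 3) ^ ((1 + κ) / 2) *
          s ^ (3 * ((2 - κ) / 2) + (1 + κ) / 2) := by
        rw [Real.mul_rpow (by norm_num) (by positivity), Real.mul_rpow (by norm_num) hs₀.le,
          ← Real.rpow_natCast_mul hs₀.le, Real.rpow_add hs₀]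
        push_cast
        ring

/-- The spike functions satisfy `∫ u_ε³ ≍ ε⁻²`, `∫ u_ε² ≍ ε⁻¹`,
`∫ (∂_x u_ε)² ≍ ε⁻³` (integrals over one period `[−π, π]`), and consequently the inequality
`|∫ u³| ≤ C ‖u‖_{H_0^1}^{2−κ} |u|_{L²}^{1+κ}` for all `u ∈ H_0^1` forces `κ ≤ 3/2`. -/
theorem spike_asymptotics_and_kappa_bound :
    (∃ c₁ C₁ c₂ C₂ c₃ C₃ : ℝ,
      0 < c₁ ∧ 0 < C₁ ∧ 0 < c₂ ∧ 0 < C₂ ∧ 0 < c₃ ∧ 0 < C₃ ∧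
      ∀ ε : ℝ, 0 < ε → ε ≤ 1 →
        (c₁ * ε⁻¹ ^ 2 ≤ ∫ x in (-π)..π, uSpike ε x ^ 3) ∧
        ((∫ x in (-π)..π, uSpike ε x ^ 3) ≤ C₁ * ε⁻¹ ^ 2) ∧
        (c₂ * ε⁻¹ ≤ ∫ x in (-π)..π, uSpike ε x ^ 2) ∧
        ((∫ x in (-π)..π, uSpike ε x ^ 2) ≤ C₂ * ε⁻¹) ∧
        (c₃ * ε⁻¹ ^ 3 ≤ ∫ x in (-π)..π, deriv (uSpike ε) x ^ 2) ∧
        ((∫ x in (-π)..π, deriv (uSpike ε) x ^ 2) ≤ C₃ * ε⁻¹ ^ 3)) ∧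
    ∀ κ C : ℝ, 0 < C →
      (∀ u : ℝ → ℝ, Function.Periodic u (2 * π) → (∃ L, LipschitzWith L u) →
        (∫ x in (-π)..π, u x) = 0 →
        |∫ x in (-π)..π, u x ^ 3| ≤
          C * (∫ x in (-π)..π, deriv u x ^ 2) ^ ((2 - κ) / 2) *
            (∫ x in (-π)..π, u x ^ 2) ^ ((1 + κ) / 2)) →
      κ ≤ 3 / 2 := by
  have hπ := Real.pi_gt_three
  refine ⟨⟨1 / 2 - 1 / π, 1, 1 / 2, 2 / 3, 2, 2, half_sub_one_div_pi_pos, one_pos,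
    by norm_num, by norm_num, two_pos, two_pos, fun ε hε hε₁ => ?_⟩,
    fun κ C hC h => CubicInterpolationBound.le_three_halves hC.le h⟩
  have hderiv := integral_deriv_uSpike_sq hε (hε₁.trans (by linarith))
  exact ⟨integral_uSpike_cube_ge hε hε₁, by simpa using integral_uSpike_cube_le hε hε₁,
    integral_uSpike_sq_ge hε hε₁, integral_uSpike_sq_le hε hε₁, hderiv.ge, hderiv.le⟩
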